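/- In the generalized quaternion (binary dihedral) group ⟨x, y : xⁿ = y² = (xy)²⟩ with |x| = 2n, |y| = 4, n > 2, the Pell-Narayana orbit s₀ = x, s₁ = y, s₂ = y², sₙ = sₙ₋₃·(sₙ₋₁)² has period 3n if n is even and 6n if n is odd. -/
import Mathlib

def PNorbit {G : Type*} [Group G] (x y : G) : ℕ → G
  | 0 => x
  | 1 => y
  | 2 => y ^ 2
  | n + 3 => PNorbit x y n * (PNorbit x y (n + 2)) ^ 2

lemma PN_step {G : Type*} [Group G] (x y : G) (m : ℕ) :
    PNorbit x y (m + 3) = PNorbit x y m * (PNorbit x y (m + 2)) ^ 2 := rfl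

open QuaternionGroup in
lemma pn_closed (n k : ℕ) :
    PNorbit (a 1 : QuaternionGroup n) (xa 0) (3*k) = a 1 ∧
    PNorbit (a 1 : QuaternionGroup n) (xa 0) (3*k+1) = xa ((2*k : ℕ)) ∧
    PNorbit (a 1 : QuaternionGroup n) (xa 0) (3*k+2) = a ((n*(k+1) : ℕ)) := by
  induction k with
  | zero =>
    refine ⟨rfl, by simp [PNorbit], ?_⟩
    show (xa 0 : QuaternionGroup n) ^ 2 = _
    rw [xa_sq]; norm_num
  | succ k ih =>
    obtain ⟨h0, h1, h2⟩ := ih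
    have e0 : 3*(k+1) = (3*k) + 3 := by ring
    have e1 : 3*(k+1)+1 = (3*k+1) + 3 := by ring
    have e2 : 3*(k+1)+2 = (3*k+2) + 3 := by ring
    have H0 : PNorbit (a 1 : QuaternionGroup n) (xa 0) (3*(k+1)) = a 1 := by
      rw [e0, PN_step]
      rw [show (3*k) + 2 = 3*k+2 from rfl, h0, h2, sq, a_mul_a, a_mul_a]
      congr 1
      rw [show ((1:ZMod (2*n)) + ((n*(k+1):ℕ) + (n*(k+1):ℕ)))
          = 1 + ((2*n : ℕ) : ZMod (2*n)) * (k+1) by push_cast; ring,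
        ZMod.natCast_self, zero_mul, add_zero]
    have H1 : PNorbit (a 1 : QuaternionGroup n) (xa 0) (3*(k+1)+1) = xa ((2*(k+1) : ℕ)) := by
      rw [e1, PN_step, h1]
      rw [show (3*k+1) + 2 = 3*(k+1) from by ring, H0, sq, a_mul_a, xa_mul_a]
      congr 1
      push_cast; ring
    have H2 : PNorbit (a 1 : QuaternionGroup n) (xa 0) (3*(k+1)+2) = a ((n*(k+1+1) : ℕ)) := by
      rw [e2, PN_step, h2]
      rw [show (3*k+2) + 2 = 3*(k+1)+1 from by ring, H1, xa_sq, a_mul_a]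
      congr 1
      push_cast; ring
    exact ⟨H0, H1, H2⟩

lemma pn_aux (n : ℕ) (hn : 2 < n) (m₀ : ℕ) (hm₀pos : 0 < m₀)
    (hdvd1 : (2*n : ℕ) ∣ 2*m₀) (hdvd2 : (2*n : ℕ) ∣ n*m₀)
    (hmin : ∀ q : ℕ, 0 < q → n ∣ q → (2*n : ℕ) ∣ n*q → m₀ ≤ q) :
    IsLeast {k : ℕ | 0 < k ∧ ∀ j : ℕ,
      PNorbit (QuaternionGroup.a 1 : QuaternionGroup n) (QuaternionGroup.xa 0) (j + k)
        = PNorbit (QuaternionGroup.a 1 : QuaternionGroup n) (QuaternionGroup.xa 0) j}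
      (3 * m₀) := by
  haveI : NeZero (2*n) := ⟨by omega⟩
  have key : ∀ a b : ℕ, (2*n) ∣ b → ((a + b : ℕ) : ZMod (2*n)) = (a : ZMod (2*n)) := by
    intro a b hb
    rw [Nat.cast_add, (ZMod.natCast_eq_zero_iff _ _).2 hb, add_zero]
  constructor
  · refine ⟨by omega, fun j => ?_⟩
    obtain ⟨q, r, hr, rfl⟩ : ∃ q r, r < 3 ∧ j = 3*q + r :=
      ⟨j/3, j%3, Nat.mod_lt _ (by norm_num), by omega⟩
    interval_cases r
    · rw [show 3*q + 0 + 3*m₀ = 3*(q+m₀) from by ring, (pn_closed n (q+m₀)).1,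
        show 3*q + 0 = 3*q from by ring, (pn_closed n q).1]
    · rw [show 3*q + 1 + 3*m₀ = 3*(q+m₀)+1 from by ring, (pn_closed n (q+m₀)).2.1,
        (pn_closed n q).2.1]
      congr 1
      rw [show 2*(q+m₀) = 2*q + 2*m₀ from by ring, key _ _ hdvd1]
    · rw [show 3*q + 2 + 3*m₀ = 3*(q+m₀)+2 from by ring, (pn_closed n (q+m₀)).2.2,
        (pn_closed n q).2.2]
      congr 1
      rw [show n*((q+m₀)+1) = n*(q+1) + n*m₀ from by ring, key _ _ hdvd2]
  · rintro k ⟨hkpos, hk⟩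
    obtain ⟨q, r, hr, rfl⟩ : ∃ q r, r < 3 ∧ k = 3*q + r :=
      ⟨k/3, k%3, Nat.mod_lt _ (by norm_num), by omega⟩
    interval_cases r
    · have h1 := hk 1
      rw [show 1 + (3*q + 0) = 3*q+1 from by ring, (pn_closed n q).2.1] at h1
      have h1' : ((2*q : ℕ) : ZMod (2*n)) = 0 := by
        have := QuaternionGroup.xa.inj h1
        simpa using this
      have hq1 : (2*n : ℕ) ∣ 2*q := (ZMod.natCast_eq_zero_iff _ _).1 h1'
      have hnq : n ∣ q := by
        obtain ⟨t, ht⟩ := hq1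
        refine ⟨t, ?_⟩
        have h2 : 2*q = 2*(n*t) := by rw [ht]; ring
        omega
      have h2 := hk 2
      rw [show 2 + (3*q + 0) = 3*q+2 from by ring, (pn_closed n q).2.2] at h2
      have h2' : ((n*(q+1) : ℕ) : ZMod (2*n)) = ((n : ℕ) : ZMod (2*n)) := by
        have := QuaternionGroup.a.inj h2
        simpa using this
      have h2'' : ((n*q : ℕ) : ZMod (2*n)) = 0 := by
        have : ((n*q : ℕ) : ZMod (2*n)) + ((n:ℕ) : ZMod (2*n)) = ((n:ℕ) : ZMod (2*n)) := by
          rw [← Nat.cast_add, show n*q + n = n*(q+1) from by ring, h2']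
        linear_combination this
      have hdq : (2*n : ℕ) ∣ n*q := (ZMod.natCast_eq_zero_iff _ _).1 h2''
      have := hmin q (by omega) hnq hdq
      omega
    · have h0 := hk 0
      rw [show 0 + (3*q + 1) = 3*q+1 from by ring, (pn_closed n q).2.1] at h0
      exact absurd h0 (by simp [PNorbit])
    · have h1 := hk 1
      rw [show 1 + (3*q + 2) = 3*(q+1) from by ring, (pn_closed n (q+1)).1] at h1
      exact absurd h1 (by simp [PNorbit])

theorem PNorbit_dicyclic (n : ℕ) (hn : 2 < n) :
    IsLeast {k : ℕ | 0 < k ∧ ∀ j : ℕ,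
      PNorbit (QuaternionGroup.a 1 : QuaternionGroup n) (QuaternionGroup.xa 0) (j + k)
        = PNorbit (QuaternionGroup.a 1 : QuaternionGroup n) (QuaternionGroup.xa 0) j}
      (if Even n then 3 * n else 6 * n) := by
  rcases em (Even n) with h | h
  · rw [if_pos h]
    obtain ⟨t, rfl⟩ := h
    refine pn_aux _ hn _ (by omega) dvd_rfl ⟨t, by ring⟩ ?_
    intro q hq hnq _
    exact Nat.le_of_dvd hq hnq
  · rw [if_neg h, show 6*n = 3*(2*n) from by ring]
    refine pn_aux n hn (2*n) (by omega) ⟨2, by ring⟩ ⟨n, by ring⟩ ?_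
    intro q hq hnq hdq
    have h2q : 2 ∣ q := by
      obtain ⟨t, ht⟩ := hdq
      exact ⟨t, Nat.eq_of_mul_eq_mul_left (show 0 < n by omega) (by rw [ht]; ring)⟩
    have hcop : Nat.Coprime 2 n := Nat.coprime_two_left.2 (Nat.not_even_iff_odd.1 h)
    exact Nat.le_of_dvd hq (Nat.Coprime.mul_dvd_of_dvd_of_dvd hcop h2q hnq)
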